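/- arXiv:2405.19066 — 4 statements merged into one kernel-verified Lean document; each statement's English description precedes it below -/
import Mathlib

section
/- Let n ≥ 1 and let s ≥ 1, j₀ ≥ 1 be such that I = [0, s−1] and J = [j₀, j₀+s−1] are sub-intervals of [0, 2ⁿ−1]. Then there exists a bijection P : I → J such that h(i) ≤ h(P(i)) for every i ∈ I; moreover, if I and J are non-overlapping (i.e. s−1 < j₀), then P can be chosen so that h(i) < h(P(i)) for every i ∈ I. -/
/-!
Induction on `n`, comparing `J` with the midpoint `2 ^ n` of `[0, 2 ^ (n + 1))`. Adding `2 ^ n`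
to a number below `2 ^ n` raises its weight by one, and complementing the bits,
`x ↦ 2 ^ n - 1 - x`, turns weight `w` into `n - w`. Hence inverting a weight-raising bijection
and conjugating it by the complement again raises weights; this carries a bijection
`[0, a) → [c, c + a)` to one from `[2 ^ n - c - a, 2 ^ n - c)` onto the top block
`[2 ^ n - a, 2 ^ n)`. When `J` straddles `2 ^ n`, the top of `I` is shifted up by `2 ^ n` and the
rest of `I` is sent onto `[j₀, 2 ^ n)` in this way.
-/

/-- `h i` is the number of ones in the binary representation of `i`. -/
def h (i : ℕ) : ℕ := (Nat.digits 2 i).sum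

open Set

lemma h_eq_mod_two_add_h_div_two (m : ℕ) : h m = m % 2 + h (m / 2) := by
  rcases Nat.eq_zero_or_pos m with rfl | hm
  · simp [h]
  · simp [h, Nat.digits_def' one_lt_two hm]

lemma h_two_pow_add {n x : ℕ} (hx : x < 2 ^ n) : h (2 ^ n + x) = h x + 1 := by
  induction n generalizing x with
  | zero => interval_cases x; simp [h]
  | succ n ih =>
    rw [h_eq_mod_two_add_h_div_two, h_eq_mod_two_add_h_div_two x, pow_succ,
      show (2 ^ n * 2 + x) / 2 = 2 ^ n + x / 2 by omega, ih (by omega)]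
    omega

lemma h_two_pow_sub_one_sub_add_h {n x : ℕ} (hx : x < 2 ^ n) : h (2 ^ n - 1 - x) + h x = n := by
  induction n generalizing x with
  | zero => interval_cases x; simp [h]
  | succ n ih =>
    have := ih (x := x / 2) (by omega)
    rw [h_eq_mod_two_add_h_div_two, h_eq_mod_two_add_h_div_two x, pow_succ,
      show (2 ^ n * 2 - 1 - x) / 2 = 2 ^ n - 1 - x / 2 by omega]
    omega

lemma bijOn_const_add_Ico (c a b : ℕ) : BijOn (c + ·) (Ico a b) (Ico (c + a) (c + b)) :=
  image_const_add_Ico c a b ▸ (add_right_injective c).injOn.bijOn_image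

lemma bijOn_sub_one_sub_Ico {N a b c d : ℕ} (had : a + d = N) (hbc : b + c = N) :
    BijOn (N - 1 - ·) (Ico a b) (Ico c d) := by
  refine InvOn.bijOn (f' := (N - 1 - ·)) ⟨fun x hx => ?_, fun y hy => ?_⟩ (fun x hx => ?_)
    (fun y hy => ?_) <;>
    simp only [mem_Ico] at * <;> omega

/-- `k = 0` and `k = 1` give the weak and the strict inequality of the theorem. -/
def HasWeightRaisingBij (k : ℕ) (A B : Set ℕ) : Prop :=
  ∃ P : ℕ → ℕ, BijOn P A B ∧ ∀ i ∈ A, h i + k ≤ h (P i)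

lemma hasWeightRaisingBij_self (A : Set ℕ) : HasWeightRaisingBij 0 A A :=
  ⟨id, bijOn_id A, fun _ _ => le_rfl⟩

namespace HasWeightRaisingBij

variable {k : ℕ} {A B : Set ℕ}

lemma mono {l : ℕ} (hP : HasWeightRaisingBij k A B) (hlk : l ≤ k) : HasWeightRaisingBij l A B :=
  let ⟨P, hbij, hw⟩ := hP
  ⟨P, hbij, fun i hi => (Nat.add_le_add_left hlk _).trans (hw i hi)⟩

lemma union {A' B' : Set ℕ} (hP : HasWeightRaisingBij k A B) (hP' : HasWeightRaisingBij k A' B')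
    (hA : Disjoint A A') (hB : Disjoint B B') : HasWeightRaisingBij k (A ∪ A') (B ∪ B') := by
  classical
  obtain ⟨P, hbij, hw⟩ := hP
  obtain ⟨P', hbij', hw'⟩ := hP'
  have hEq : EqOn (A.piecewise P P') P A := A.piecewise_eqOn P P'
  have hEq' : EqOn (A.piecewise P P') P' A' := fun x hx =>
    A.piecewise_eq_of_notMem P P' (hA.notMem_of_mem_right hx)
  refine ⟨A.piecewise P P', (hbij.congr hEq.symm).union (hbij'.congr hEq'.symm) ?_, ?_⟩
  · refine (injOn_union hA).2 ⟨hbij.injOn.congr hEq.symm, hbij'.injOn.congr hEq'.symm, ?_⟩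
    intro x hx y hy
    rw [hEq hx, hEq' hy]
    exact hB.ne_of_mem (hbij.mapsTo hx) (hbij'.mapsTo hy)
  · rintro i (hi | hi)
    · rw [hEq hi]; exact hw i hi
    · rw [hEq' hi]; exact hw' i hi

lemma two_pow_add {n a b : ℕ} (hP : HasWeightRaisingBij k A (Ico a b)) (hb : b ≤ 2 ^ n) :
    HasWeightRaisingBij (k + 1) A (Ico (2 ^ n + a) (2 ^ n + b)) := by
  obtain ⟨P, hbij, hw⟩ := hP
  refine ⟨(2 ^ n + ·) ∘ P, (bijOn_const_add_Ico _ _ _).comp hbij, fun i hi => ?_⟩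
  have hPi := (hbij.mapsTo hi).2
  rw [Function.comp_apply, h_two_pow_add (by omega)]
  exact Nat.add_le_add_right (hw i hi) 1

lemma two_pow_sub {n a b c d : ℕ} (hP : HasWeightRaisingBij k (Ico a b) (Ico c d))
    (hab : a ≤ b) (hb : b ≤ 2 ^ n) (hcd : c ≤ d) (hd : d ≤ 2 ^ n) :
    HasWeightRaisingBij k (Ico (2 ^ n - d) (2 ^ n - c)) (Ico (2 ^ n - b) (2 ^ n - a)) := by
  obtain ⟨P, hbij, hw⟩ := hP
  set Q := Function.invFunOn P (Ico a b)
  have hQ : BijOn Q (Ico c d) (Ico a b) := hbij.symm hbij.invOn_invFunOn.symm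
  have hcompl_dom : BijOn (2 ^ n - 1 - ·) (Ico (2 ^ n - d) (2 ^ n - c)) (Ico c d) :=
    bijOn_sub_one_sub_Ico (by omega) (by omega)
  have hcompl_cod : BijOn (2 ^ n - 1 - ·) (Ico a b) (Ico (2 ^ n - b) (2 ^ n - a)) :=
    bijOn_sub_one_sub_Ico (by omega) (by omega)
  refine ⟨_, hcompl_cod.comp (hQ.comp hcompl_dom), fun j hj => ?_⟩
  set y := 2 ^ n - 1 - j
  have hy : y ∈ Ico c d := hcompl_dom.mapsTo hj
  have hPQy : P (Q y) = y := hbij.invOn_invFunOn.2 hy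
  have hQy : Q y ∈ Ico a b := hQ.mapsTo hy
  have hwy := hw _ hQy
  rw [hPQy] at hwy
  have hj' : 2 ^ n - 1 - y = j := by simp only [mem_Ico] at hj hy; omega
  have hy_compl := h_two_pow_sub_one_sub_add_h (n := n) (x := y)
    (by simp only [mem_Ico] at hy; omega)
  have hQy_compl := h_two_pow_sub_one_sub_add_h (n := n) (x := Q y)
    (by simp only [mem_Ico] at hQy; omega)
  rw [hj'] at hy_compl
  show h j + k ≤ h (2 ^ n - 1 - Q y)
  omega

end HasWeightRaisingBij

lemma hasWeightRaisingBij_Ico (n : ℕ) {s j₀ k : ℕ} (hJ : j₀ + s ≤ 2 ^ n)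
    (hk : k = 0 ∨ k = 1 ∧ s ≤ j₀) :
    HasWeightRaisingBij k (Ico 0 s) (Ico j₀ (j₀ + s)) := by
  induction n generalizing s j₀ k with
  | zero =>
    rcases Nat.eq_zero_or_pos s with rfl | hs
    · exact ⟨id, by simp, by simp⟩
    · obtain ⟨rfl, rfl⟩ : j₀ = 0 ∧ k = 0 := by omega
      simpa using hasWeightRaisingBij_self (Ico 0 s)
  | succ n ih =>
    have hk1 : k ≤ 1 := by omega
    rw [pow_succ] at hJ
    by_cases hlow : j₀ + s ≤ 2 ^ n
    · exact ih hlow hk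
    by_cases hhigh : 2 ^ n ≤ j₀
    · convert ((ih (s := s) (j₀ := j₀ - 2 ^ n) (k := 0) (by omega) (.inl rfl)).two_pow_add
        (n := n) (by omega)).mono hk1 using 2 <;> omega
    by_cases hs : s ≤ 2 ^ n
    · set b := j₀ + s - 2 ^ n
      have hbot : HasWeightRaisingBij k (Ico 0 b) (Ico (2 ^ n) (j₀ + s)) := by
        convert ((hasWeightRaisingBij_self (Ico 0 b)).two_pow_add (n := n) (by omega)).mono hk1
          using 2 <;> omega
      have htop : HasWeightRaisingBij k (Ico b s) (Ico j₀ (2 ^ n)) := by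
        convert (ih (s := 2 ^ n - j₀) (j₀ := 2 ^ n - s) (k := k) (by omega)
          (by omega)).two_pow_sub (n := n) (by omega) (by omega) (by omega) (by omega)
          using 2 <;> omega
      rw [← Ico_union_Ico_eq_Ico (Nat.zero_le b) (by omega : b ≤ s),
        ← Ico_union_Ico_eq_Ico (by omega : j₀ ≤ 2 ^ n) (by omega : 2 ^ n ≤ j₀ + s),
        union_comm (Ico j₀ _)]
      exact hbot.union htop Ico_disjoint_Ico_same Ico_disjoint_Ico_same.symm
    · obtain rfl : k = 0 := by omega
      have hbot : HasWeightRaisingBij 0 (Ico 0 j₀) (Ico s (j₀ + s)) := by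
        convert ((ih (s := j₀) (j₀ := s - 2 ^ n) (k := 0) (by omega) (.inl rfl)).two_pow_add
          (n := n) (by omega)).mono (Nat.zero_le 1) using 2 <;> omega
      rw [← Ico_union_Ico_eq_Ico (Nat.zero_le j₀) (by omega : j₀ ≤ s),
        ← Ico_union_Ico_eq_Ico (by omega : j₀ ≤ s) (by omega : s ≤ j₀ + s),
        union_comm (Ico j₀ s)]
      exact hbot.union (hasWeightRaisingBij_self _) Ico_disjoint_Ico_same
        Ico_disjoint_Ico_same.symm

theorem graham_special_bijection_general (n s j₀ : ℕ) (hJ : j₀ + s ≤ 2 ^ n) :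
    ∃ P : ℕ → ℕ, Set.BijOn P (Set.Ico 0 s) (Set.Ico j₀ (j₀ + s)) ∧
      (∀ i ∈ Set.Ico 0 s, h i ≤ h (P i)) ∧
      (s ≤ j₀ → ∀ i ∈ Set.Ico 0 s, h i < h (P i)) := by
  by_cases hsj : s ≤ j₀
  · obtain ⟨P, hbij, hw⟩ := hasWeightRaisingBij_Ico n hJ (.inr ⟨rfl, hsj⟩)
    exact ⟨P, hbij, fun i hi => (hw i hi).trans' (Nat.le_succ _), fun _ => hw⟩
  · obtain ⟨P, hbij, hw⟩ := hasWeightRaisingBij_Ico n hJ (.inl rfl)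
    exact ⟨P, hbij, hw, fun hsj' => (hsj hsj').elim⟩

/-- Graham's lemma: for `I = [0, s-1]` and `J = [j₀, j₀+s-1]` sub-intervals of
`[0, 2^n - 1]`, there is a bijection `P : I → J` with `h i ≤ h (P i)` for all `i ∈ I`,
which is strict whenever `I` and `J` are non-overlapping (i.e. `s - 1 < j₀`). -/
theorem graham_special_bijection (n s j₀ : ℕ) (hn : 1 ≤ n) (hs : 1 ≤ s) (hj₀ : 1 ≤ j₀)
    (hI : s ≤ 2 ^ n) (hJ : j₀ + s ≤ 2 ^ n) :
    ∃ P : ℕ → ℕ, Set.BijOn P (Set.Ico 0 s) (Set.Ico j₀ (j₀ + s)) ∧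
      (∀ i ∈ Set.Ico 0 s, h i ≤ h (P i)) ∧
      (s ≤ j₀ → ∀ i ∈ Set.Ico 0 s, h i < h (P i)) :=
  graham_special_bijection_general n s j₀ hJ
end

section
/- Let I = [i₀, i₀+s−1] and J = [j₀, j₀+s−1] with j₀ > i₀ be non-overlapping sub-intervals of [0, 2ⁿ−1] (i.e. i₀+s−1 < j₀) that admit a special bijection. Then for all 1 ≤ q ≤ n: ∑_{i ∈ I} (h_q(i) + h_{q−1}(i)) ≤ ∑_{j ∈ J} h_q(j). -/
/-- `hq q i = C(h i, q)`. -/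
def hq (q i : ℕ) : ℕ := (h i).choose q

/-- A bijection `P` from `I = [i₀, i₀+s-1]` onto `J = [j₀, j₀+s-1]` (with `j₀ > i₀`)
is special if `h i ≤ h (P i)` for each `i ∈ I`, and these inequalities are strict
in case `I` and `J` are non-overlapping (i.e. `i₀ + s - 1 < j₀`). -/
def IsSpecialBijection (i₀ j₀ s : ℕ) (P : ℕ → ℕ) : Prop :=
  Set.BijOn P (Set.Ico i₀ (i₀ + s)) (Set.Ico j₀ (j₀ + s)) ∧
  (∀ i ∈ Set.Ico i₀ (i₀ + s), h i ≤ h (P i)) ∧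
  (i₀ + s ≤ j₀ → ∀ i ∈ Set.Ico i₀ (i₀ + s), h i < h (P i))

/-- If `I = [i₀, i₀+s-1]` and `J = [j₀, j₀+s-1]` with `j₀ > i₀` are non-overlapping
sub-intervals of `[0, 2^n - 1]` admitting a special bijection, then for all `1 ≤ q ≤ n`:
`∑_{i ∈ I} (h_q i + h_{q-1} i) ≤ ∑_{j ∈ J} h_q j`. -/
theorem sum_hq_le_of_special_bijection (n i₀ j₀ s : ℕ) (hs : 1 ≤ s) (hij : i₀ < j₀)
    (hdisj : i₀ + s ≤ j₀)
    (hI : i₀ + s ≤ 2 ^ n) (hJ : j₀ + s ≤ 2 ^ n)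
    (hP : ∃ P : ℕ → ℕ, IsSpecialBijection i₀ j₀ s P) :
    ∀ q, 1 ≤ q → q ≤ n →
      ∑ i ∈ Finset.Ico i₀ (i₀ + s), (hq q i + hq (q - 1) i) ≤
        ∑ j ∈ Finset.Ico j₀ (j₀ + s), hq q j := by
  obtain ⟨P, hbij, _, hstrict⟩ := hP
  intro q hq1 hqn
  have hmem : ∀ a ∈ Finset.Ico i₀ (i₀ + s), a ∈ Set.Ico i₀ (i₀ + s) := by
    intro a ha; simpa using ha
  have hJeq : ∑ i ∈ Finset.Ico i₀ (i₀ + s), hq q (P i)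
      = ∑ j ∈ Finset.Ico j₀ (j₀ + s), hq q j := by
    refine Finset.sum_bij (fun a _ => P a) ?_ ?_ ?_ ?_
    · intro a ha
      have := hbij.mapsTo (hmem a ha)
      simpa using this
    · intro a ha b hb hab
      exact hbij.injOn (hmem a ha) (hmem b hb) hab
    · intro b hb
      obtain ⟨a, haI, hPa⟩ := hbij.surjOn (by simpa using hb : b ∈ Set.Ico j₀ (j₀ + s))
      exact ⟨a, by simpa using haI, hPa⟩
    · intro a _; rfl
  rw [← hJeq]
  refine Finset.sum_le_sum fun i hi => ?_
  have hlt : h i < h (P i) := hstrict hdisj i (hmem i hi)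
  obtain ⟨k, rfl⟩ := Nat.exists_eq_add_of_le hq1
  have : hq (1 + k) i + hq (1 + k - 1) i = (h i + 1).choose (1 + k) := by
    simp only [hq]
    rw [add_comm 1 k, Nat.add_sub_cancel, Nat.choose_succ_succ (h i) k, add_comm]
  rw [this]
  exact Nat.choose_le_choose _ hlt
end

section
/- For all n ≥ 1, 1 ≤ k ≤ 2ⁿ and 0 ≤ q ≤ n, the set S*_{k,n} = {bin(0), bin(1), …, bin(k−1)} ⊆ B_n contains exactly ∑_{j=0}^{k−1} h_q(j) many q-dimensional subcubes, i.e. m_q(S*_{k,n}) = ∑_{j=0}^{k−1} h_q(j). -/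
/-- `C` is a `q`-dimensional subcube of the binary `n`-cube `B_n = {0,1}ⁿ`:
it is cut out by fixing a bit pattern `b` on a set `Q` of `n - q` coordinates. -/
def IsSubcube (n q : ℕ) (C : Finset (Fin n → Bool)) : Prop :=
  ∃ (Q : Finset (Fin n)) (b : Fin n → Bool),
    Q.card = n - q ∧ C = Finset.univ.filter (fun x => ∀ i ∈ Q, x i = b i)

open Classical in
/-- `mq n q S` is the number of `q`-dimensional subcubes of `B_n` contained in `S`. -/
noncomputable def mq (n q : ℕ) (S : Finset (Fin n → Bool)) : ℕ :=
  (Finset.univ.filter fun C : Finset (Fin n → Bool) => IsSubcube n q C ∧ C ⊆ S).card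

/-- `bin n i` is the `n`-bit binary representation of `i`, viewed as a vertex of
the `n`-cube (coordinate `r` is bit `r` of `i`). -/
def bin (n : ℕ) (i : ℕ) : Fin n → Bool := fun r => i.testBit r

/-- `Sstar n k = {bin 0, bin 1, …, bin (k-1)} ⊆ B_n`. -/
def Sstar (n k : ℕ) : Finset (Fin n → Bool) := (Finset.range k).image (bin n)

namespace Aux

def val {n : ℕ} (x : Fin n → Bool) : ℕ := ∑ i, if x i then 2^(i:ℕ) else 0

lemma val_bin (n j : ℕ) (hj : j < 2^n) : val (bin n j) = j := by
  induction n generalizing j with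
  | zero => simp at hj; subst hj; simp [val]
  | succ n ih =>
    have h2 : j / 2 < 2^n := by
      rw [pow_succ] at hj; omega
    have := ih (j/2) h2
    unfold val bin at *
    rw [Fin.sum_univ_succ]
    have hrw : ∀ i : Fin n,
        (if j.testBit ((i.succ : Fin (n+1)) : ℕ) then 2^((i.succ : Fin (n+1)):ℕ) else 0)
        = 2 * (if (j/2).testBit (i:ℕ) then 2^(i:ℕ) else 0) := by
      intro i
      have : ((i.succ : Fin (n+1)) : ℕ) = (i:ℕ) + 1 := rfl
      rw [this, Nat.testBit_add_one, pow_succ]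
      split <;> ring
    rw [Finset.sum_congr rfl (fun i _ => hrw i), ← Finset.mul_sum, this]
    have h0 : ((0 : Fin (n+1)) : ℕ) = 0 := rfl
    rw [h0, Nat.testBit_zero]
    rcases Nat.mod_two_eq_zero_or_one j with hm | hm <;> simp [hm] <;> omega

lemma bin_val {n : ℕ} (x : Fin n → Bool) : bin n (val x) = x ∧ val x < 2^n := by
  have hinj : Set.InjOn (bin n) (Finset.range (2^n)) := by
    intro a ha b hb hab
    simp only [Finset.coe_range, Set.mem_Iio] at ha hb
    rw [← val_bin n a ha, ← val_bin n b hb, hab]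
  have hcard : ((Finset.range (2^n)).image (bin n)).card = 2^n := by
    rw [Finset.card_image_of_injOn hinj, Finset.card_range]
  have huniv : (Finset.range (2^n)).image (bin n) = Finset.univ := by
    apply Finset.eq_univ_of_card
    rw [hcard]; simp
  have hx : x ∈ (Finset.range (2^n)).image (bin n) := huniv ▸ Finset.mem_univ x
  obtain ⟨j, hj, hjx⟩ := Finset.mem_image.mp hx
  rw [Finset.mem_range] at hj
  have : val x = j := by rw [← hjx, val_bin n j hj]
  constructor
  · rw [this, hjx]
  · rw [this]; exact hj

lemma val_mono {n : ℕ} {x y : Fin n → Bool} (hxy : ∀ i, x i = true → y i = true) :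
    val x ≤ val y := by
  apply Finset.sum_le_sum
  intro i _
  cases hx : x i
  · simp [hx]
  · simp [hx, hxy i hx]

lemma h_eq_card (n j : ℕ) (hj : j < 2^n) :
    h j = (Finset.univ.filter fun i : Fin n => j.testBit (i:ℕ)).card := by
  have key : ∀ n j : ℕ, j < 2^n → h j = ∑ i ∈ Finset.range n, if j.testBit i then 1 else 0 := by
    intro n
    induction n with
    | zero => intro j hj; simp at hj; subst hj; simp [h]
    | succ n ih =>
      intro j hj
      rcases Nat.eq_zero_or_pos j with rfl | hpos
      · simp [h]
      · have h2 : j / 2 < 2^n := by rw [pow_succ] at hj; omega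
        have hd : h j = j % 2 + h (j/2) := by
          unfold h
          rw [Nat.digits_def' (by norm_num : 1 < 2) hpos]
          simp
        rw [hd, ih (j/2) h2, Finset.sum_range_succ']
        have : ∀ i, j.testBit (i+1) = (j/2).testBit i := fun i => Nat.testBit_add_one j i
        simp only [this, Nat.testBit_zero]
        rcases Nat.mod_two_eq_zero_or_one j with hm | hm <;> simp [hm] <;> omega
  rw [key n j hj, Finset.card_filter]
  rw [Fin.sum_univ_eq_sum_range (fun i => if j.testBit i then 1 else 0) n]

end Aux


namespace Aux

lemma mem_Sstar {n k : ℕ} (hk2 : k ≤ 2^n) (x : Fin n → Bool) :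
    x ∈ Sstar n k ↔ val x < k := by
  unfold Sstar
  simp only [Finset.mem_image, Finset.mem_range]
  constructor
  · rintro ⟨j, hj, rfl⟩
    rw [val_bin n j (lt_of_lt_of_le hj hk2)]; exact hj
  · intro hv
    exact ⟨val x, hv, (bin_val x).1⟩

open Classical in
noncomputable def cube (n j : ℕ) (F : Finset (Fin n)) : Finset (Fin n → Bool) :=
  Finset.univ.filter (fun x => ∀ i, i ∉ F → x i = j.testBit (i:ℕ))

open Classical

lemma mem_cube {n j : ℕ} {F : Finset (Fin n)} {x : Fin n → Bool} :
    x ∈ cube n j F ↔ ∀ i, i ∉ F → x i = j.testBit (i:ℕ) := by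
  simp [cube]

lemma bin_mem_cube {n j : ℕ} {F : Finset (Fin n)} : bin n j ∈ cube n j F :=
  mem_cube.mpr (fun _ _ => rfl)

lemma flip_mem_cube {n j : ℕ} {F : Finset (Fin n)} (i : Fin n) :
    i ∈ F ↔ Function.update (bin n j) i (!(j.testBit (i:ℕ))) ∈ cube n j F := by
  constructor
  · intro hi
    rw [mem_cube]
    intro i' hi'
    have hne : i' ≠ i := fun he => hi' (he ▸ hi)
    rw [Function.update_of_ne hne]; rfl
  · intro hmem
    by_contra hi
    have := mem_cube.mp hmem i hi
    rw [Function.update_self] at this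
    simp [bin] at this

lemma testBit_imp {n j j' : ℕ} {F F' : Finset (Fin n)}
    (hF' : ∀ i ∈ F', j'.testBit (i:ℕ) = true)
    (hcc : cube n j F = cube n j' F') (i : Fin n)
    (hb : j.testBit (i:ℕ) = true) : j'.testBit (i:ℕ) = true := by
  have hm : bin n j ∈ cube n j' F' := hcc ▸ bin_mem_cube
  by_cases hiF : i ∈ F'
  · exact hF' i hiF
  · have := mem_cube.mp hm i hiF
    rw [← this]; exact hb

end Aux

/-- For `n ≥ 1`, `1 ≤ k ≤ 2^n` and `q ≤ n`, the set `S*_{k,n}` contains exactly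
`∑_{j=0}^{k-1} h_q j` many `q`-dimensional subcubes. -/
theorem mq_Sstar (n k q : ℕ) (hn : 1 ≤ n) (hk1 : 1 ≤ k) (hk2 : k ≤ 2 ^ n) (hq' : q ≤ n) :
    mq n q (Sstar n k) = ∑ j ∈ Finset.range k, hq q j := by
  classical
  open Aux in
  have hRHS : ∑ j ∈ Finset.range k, hq q j
      = ((Finset.range k).sigma fun j =>
          (Finset.univ.filter fun i : Fin n => j.testBit (i:ℕ)).powersetCard q).card := by
    rw [Finset.card_sigma]
    apply Finset.sum_congr rfl
    intro j hj
    rw [Finset.mem_range] at hj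
    rw [Finset.card_powersetCard, ← Aux.h_eq_card n j (lt_of_lt_of_le hj hk2)]
    rfl
  rw [hRHS]
  unfold mq
  refine (Finset.card_bij (fun p _ => Aux.cube n p.1 p.2) ?_ ?_ ?_).symm
  · -- maps into the set of subcubes contained in Sstar
    rintro ⟨j, F⟩ hp
    rw [Finset.mem_sigma, Finset.mem_range, Finset.mem_powersetCard] at hp
    obtain ⟨hjk, hFsub, hFcard⟩ := hp
    have hones : ∀ i ∈ F, j.testBit (i:ℕ) = true := by
      intro i hi
      have := hFsub hi
      simpa using this
    rw [Finset.mem_filter]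
    refine ⟨Finset.mem_univ _, ⟨Fᶜ, bin n j, ?_, ?_⟩, ?_⟩
    · rw [Finset.card_compl, hFcard]; simp
    · unfold Aux.cube
      apply Finset.filter_congr
      intro x _
      simp only [Finset.mem_compl, bin]
    · intro x hx
      rw [Aux.mem_cube] at hx
      rw [Aux.mem_Sstar hk2]
      have hle : Aux.val x ≤ Aux.val (bin n j) := by
        apply Aux.val_mono
        intro i hxi
        show j.testBit (i:ℕ) = true
        by_cases hiF : i ∈ F
        · exact hones i hiF
        · rw [← hx i hiF]; exact hxi
      have : Aux.val (bin n j) = j := Aux.val_bin n j (lt_of_lt_of_le hjk hk2)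
      exact lt_of_le_of_lt (this ▸ hle) hjk
  · -- injective
    rintro ⟨j, F⟩ hp ⟨j', F'⟩ hp' hcc
    replace hcc : Aux.cube n j F = Aux.cube n j' F' := hcc
    rw [Finset.mem_sigma, Finset.mem_range, Finset.mem_powersetCard] at hp hp'
    obtain ⟨hjk, hFsub, hFcard⟩ := hp
    obtain ⟨hjk', hFsub', hFcard'⟩ := hp'
    have hones : ∀ i ∈ F, j.testBit (i:ℕ) = true := fun i hi => by simpa using hFsub hi
    have hones' : ∀ i ∈ F', j'.testBit (i:ℕ) = true := fun i hi => by simpa using hFsub' hi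
    have hjj' : j = j' := by
      apply Nat.eq_of_testBit_eq
      intro i
      by_cases hin : i < n
      · have h1 := Aux.testBit_imp hones' hcc ⟨i, hin⟩
        have h2 := Aux.testBit_imp hones hcc.symm ⟨i, hin⟩
        simp only [Fin.val_mk] at h1 h2
        cases hb : j.testBit i
        · cases hb' : j'.testBit i
          · rfl
          · exact absurd (h2 hb') (by rw [hb]; exact Bool.false_ne_true)
        · rw [h1 hb]
      · have hn1 : j < 2^i := lt_of_lt_of_le (lt_of_lt_of_le hjk hk2)
          (Nat.pow_le_pow_right (by norm_num) (by omega))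
        have hn2 : j' < 2^i := lt_of_lt_of_le (lt_of_lt_of_le hjk' hk2)
          (Nat.pow_le_pow_right (by norm_num) (by omega))
        rw [Nat.testBit_lt_two_pow hn1, Nat.testBit_lt_two_pow hn2]
    subst hjj'
    have hFF' : F = F' := by
      ext i
      rw [Aux.flip_mem_cube (j := j) i, hcc, ← Aux.flip_mem_cube i]
    subst hFF'
    rfl
  · -- surjective
    intro C hC
    rw [Finset.mem_filter] at hC
    obtain ⟨-, ⟨Q, b, hQcard, rfl⟩, hss⟩ := hC
    set xmax : Fin n → Bool := fun i => if i ∈ Q then b i else true with hxmax_def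
    have hxmax_mem : xmax ∈ Finset.univ.filter (fun x => ∀ i ∈ Q, x i = b i) := by
      rw [Finset.mem_filter]
      exact ⟨Finset.mem_univ _, fun i hi => if_pos hi⟩
    set j := Aux.val xmax with hj_def
    have hbv : bin n j = xmax := (Aux.bin_val xmax).1
    have hjk : j < k := (Aux.mem_Sstar hk2 xmax).mp (hss hxmax_mem)
    refine ⟨⟨j, Qᶜ⟩, ?_, ?_⟩
    · rw [Finset.mem_sigma, Finset.mem_range, Finset.mem_powersetCard]
      refine ⟨hjk, ?_, ?_⟩
      · intro i hi
        rw [Finset.mem_compl] at hi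
        simp only [Finset.mem_filter, Finset.mem_univ, true_and]
        show j.testBit (i:ℕ) = true
        have : bin n j i = xmax i := by rw [hbv]
        rw [hxmax_def] at this
        simp only [if_neg hi] at this
        exact this
      · rw [Finset.card_compl, hQcard]
        simp
        omega
    · ext x
      rw [Aux.mem_cube, Finset.mem_filter]
      simp only [Finset.mem_compl, not_not, Finset.mem_univ, true_and]
      constructor
      · intro hcond i hi
        rw [hcond i hi]
        have : bin n j i = xmax i := by rw [hbv]
        rw [hxmax_def] at this
        simp only [if_pos hi] at this
        exact this
      · intro hcond i hi
        rw [hcond i hi]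
        have : bin n j i = xmax i := by rw [hbv]
        rw [hxmax_def] at this
        simp only [if_pos hi] at this
        exact this.symm
end

section
/- For all n ≥ 1, 1 ≤ k ≤ 2ⁿ and 0 ≤ q ≤ n, and for every set S ⊆ B_n of size k, the number of q-dimensional subcubes contained in S satisfies m_q(S) ≤ ∑_{j=0}^{k−1} h_q(j). In particular, S*_{k,n} = {bin(0), …, bin(k−1)} is an optimal solution of the problem of finding a k-element subset of B_n containing a maximal number of q-dimensional subcubes. -/
/-!
Write `W_q(k) = ∑_{j<k} C(h j, q)`. Cutting `B_{m+1}` along one coordinate splits `S` into two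
halves `S₀, S₁ ⊆ B_m`, and a `(q+1)`-subcube of `S` is determined by its two slices: it is
either a `(q+1)`-subcube of one half, or a `q`-subcube of `S₀ ∩ S₁` taken twice. By induction
on the dimension, the upper bound therefore reduces to
`W_{q+1}(a) + W_{q+1}(b) + W_q(c) ≤ W_{q+1}(a + b)` for `c ≤ min a b`. By Pascal's rule this
follows from `∑_{j<a} f (h j) + ∑_{j<b} f (h j + 1) ≤ ∑_{j<a+b} f (h j)` for monotone `f`
and `b ≤ a`, which is proved by halving `a` and `b`, since `h (2j) = h j` and
`h (2j+1) = h j + 1`.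

Conversely, `S*_{k,n}` is a lower set of the cube. A vertex `x` of a lower set `T`, together
with a `q`-set `F` of coordinates where `x` is `1`, spans the subcube `{y : y = x off F} ⊆ T`
whose top element is `x`. These subcubes are pairwise distinct, so `T` contains at least
`∑_{x ∈ T} C(|x|, q)` of them, and for `T = S*_{k,n}` this sum is `W_q(k)`.
-/

open Finset

lemma h_eq_mod_add_h_div (j : ℕ) : h j = j % 2 + h (j / 2) := by
  rcases Nat.eq_zero_or_pos j with rfl | hj
  · rfl
  · simp [h, Nat.digits_def' (by norm_num : 1 < 2) hj]

lemma h_two_mul (m : ℕ) : h (2 * m) = h m := by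
  rw [h_eq_mod_add_h_div]; simp

lemma h_two_mul_add_one (m : ℕ) : h (2 * m + 1) = h m + 1 := by
  rw [h_eq_mod_add_h_div, show (2 * m + 1) / 2 = m by omega]; omega

def weightSum (f : ℕ → ℕ) (k : ℕ) : ℕ := ∑ j ∈ range k, f (h j)

namespace weightSum

variable (f : ℕ → ℕ)

lemma succ (k : ℕ) : weightSum f (k + 1) = weightSum f k + f (h k) :=
  sum_range_succ _ _

lemma two_mul (m : ℕ) :
    weightSum f (2 * m) = weightSum f m + weightSum (fun i => f (i + 1)) m := by
  induction m with
  | zero => rfl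
  | succ m ih =>
    rw [show 2 * (m + 1) = 2 * m + 1 + 1 by ring, succ, succ, ih, h_two_mul_add_one,
      h_two_mul, succ, succ]
    ring

lemma two_mul_add_one (m : ℕ) :
    weightSum f (2 * m + 1) = weightSum f m + weightSum (fun i => f (i + 1)) m + f (h m) := by
  rw [succ, two_mul, h_two_mul]

lemma mono : Monotone (weightSum f) := fun _ _ hkl =>
  sum_le_sum_of_subset (range_subset_range.2 hkl)

variable {f}

lemma add_shift_le_add (hf : Monotone f) {a b : ℕ} (hba : b ≤ a) :
    weightSum f a + weightSum (fun i => f (i + 1)) b ≤ weightSum f (a + b) := by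
  induction h : a + b using Nat.strong_induction_on generalizing f a b with
  | _ N ih =>
  subst h
  rcases Nat.eq_zero_or_pos b with rfl | hb
  · rfl
  have hg : Monotone fun i => f (i + 1) := fun i j hij => hf (by omega)
  rcases Nat.even_or_odd' a with ⟨s, rfl | rfl⟩ <;>
    rcases Nat.even_or_odd' b with ⟨t, rfl | rfl⟩
  · rw [show 2 * s + 2 * t = 2 * (s + t) by ring, two_mul, two_mul, two_mul]
    have := ih _ (by omega) hf (a := s) (b := t) (by omega) rfl
    have := ih _ (by omega) hg (a := s) (b := t) (by omega) rfl
    omega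
  · rw [show 2 * s + (2 * t + 1) = 2 * (s + t) + 1 by ring, two_mul, two_mul_add_one,
      two_mul_add_one]
    have := ih _ (by omega) hf (a := s) (b := t + 1) (by omega) rfl
    have := ih _ (by omega) hg (a := s) (b := t) (by omega) rfl
    rw [succ, show s + (t + 1) = s + t + 1 by ring, succ] at *
    omega
  · rw [show 2 * s + 1 + 2 * t = 2 * (s + t) + 1 by ring, two_mul_add_one, two_mul,
      two_mul_add_one]
    have := ih _ (by omega) hf (a := s + 1) (b := t) (by omega) rfl
    have := ih _ (by omega) hg (a := s) (b := t) (by omega) rfl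
    rw [succ, show s + 1 + t = s + t + 1 by ring, succ] at *
    omega
  · rw [show 2 * s + 1 + (2 * t + 1) = 2 * (s + t + 1) by ring, two_mul_add_one,
      two_mul_add_one, two_mul]
    rcases (show t ≤ s by omega).eq_or_lt with rfl | hts
    · rw [show t + t + 1 = 2 * t + 1 by ring, two_mul_add_one, two_mul_add_one]
    have := ih _ (by omega) hf (a := s + 1) (b := t) (by omega) rfl
    have := ih _ (by omega) hg (a := s) (b := t + 1) (by omega) rfl
    have := hf (show h t + 1 ≤ h t + 1 + 1 by omega)
    simp only [show s + 1 + t = s + t + 1 by ring, show s + (t + 1) = s + t + 1 by ring,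
      succ] at *
    omega

lemma choose_succ_shift (q k : ℕ) :
    weightSum (fun i => (i + 1).choose (q + 1)) k =
      weightSum (·.choose (q + 1)) k + weightSum (·.choose q) k := by
  simp only [weightSum, ← sum_add_distrib, Nat.choose_succ_succ', add_comm]

lemma choose_succ_add_choose_le (q : ℕ) {a b c : ℕ} (hca : c ≤ a) (hcb : c ≤ b) :
    weightSum (·.choose (q + 1)) a + weightSum (·.choose (q + 1)) b + weightSum (·.choose q) c
      ≤ weightSum (·.choose (q + 1)) (a + b) := by
  wlog hba : b ≤ a generalizing a b
  · have := this hcb hca (by omega)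
    rwa [add_comm b a, add_comm (weightSum _ b)] at this
  calc _ ≤ weightSum (·.choose (q + 1)) a + weightSum (fun i => (i + 1).choose (q + 1)) b := by
        rw [choose_succ_shift, ← add_assoc]
        gcongr
        exact mono _ hcb
    _ ≤ _ := add_shift_le_add (Nat.choose_mono _) hba

end weightSum

def subcube {n : ℕ} (Q : Finset (Fin n)) (b : Fin n → Bool) : Finset (Fin n → Bool) :=
  univ.filter fun x => ∀ i ∈ Q, x i = b i

open Classical in
noncomputable def subcubesIn (n q : ℕ) (S : Finset (Fin n → Bool)) :
    Finset (Finset (Fin n → Bool)) :=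
  univ.filter fun C => IsSubcube n q C ∧ C ⊆ S

section Subcube

variable {n q : ℕ}

lemma isSubcube_iff {C : Finset (Fin n → Bool)} :
    IsSubcube n q C ↔ ∃ Q b, #Q = n - q ∧ C = subcube Q b :=
  Iff.rfl

lemma mq_eq_card_subcubesIn (S : Finset (Fin n → Bool)) : mq n q S = #(subcubesIn n q S) :=
  rfl

@[simp]
lemma mem_subcubesIn {S C : Finset (Fin n → Bool)} :
    C ∈ subcubesIn n q S ↔ IsSubcube n q C ∧ C ⊆ S := by
  simp [subcubesIn]

@[simp]
lemma mem_subcube {Q : Finset (Fin n)} {b x : Fin n → Bool} :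
    x ∈ subcube Q b ↔ ∀ i ∈ Q, x i = b i := by
  simp [subcube]

lemma subcube_univ (b : Fin n → Bool) : subcube univ b = {b} := by
  ext x; simp [funext_iff]

lemma subcube_empty (b : Fin n → Bool) : subcube ∅ b = univ := by
  ext x; simp

lemma isSubcube_zero_iff {C : Finset (Fin n → Bool)} : IsSubcube n 0 C ↔ ∃ x, C = {x} := by
  have hQ (Q : Finset (Fin n)) : #Q = n ↔ Q = univ := by
    rw [← card_eq_iff_eq_univ, Fintype.card_fin]
  simp only [isSubcube_iff, Nat.sub_zero, hQ]
  constructor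
  · rintro ⟨Q, b, rfl, rfl⟩
    exact ⟨b, subcube_univ b⟩
  · rintro ⟨x, rfl⟩
    exact ⟨univ, x, rfl, (subcube_univ x).symm⟩

lemma isSubcube_self_iff {C : Finset (Fin n → Bool)} : IsSubcube n n C ↔ C = univ := by
  simp only [isSubcube_iff, Nat.sub_self, card_eq_zero]
  constructor
  · rintro ⟨Q, b, rfl, rfl⟩
    exact subcube_empty b
  · rintro rfl
    exact ⟨∅, fun _ => false, rfl, (subcube_empty _).symm⟩

lemma mq_zero (S : Finset (Fin n → Bool)) : mq n 0 S = #S := by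
  suffices subcubesIn n 0 S = S.map ⟨singleton, singleton_injective⟩ by
    rw [mq_eq_card_subcubesIn, this, card_map]
  ext C
  simp only [mem_subcubesIn, isSubcube_zero_iff, mem_map, Function.Embedding.coeFn_mk]
  constructor
  · rintro ⟨⟨x, rfl⟩, hx⟩
    exact ⟨x, singleton_subset_iff.1 hx, rfl⟩
  · rintro ⟨x, hx, rfl⟩
    exact ⟨⟨x, rfl⟩, singleton_subset_iff.2 hx⟩

lemma mq_self_le_one (S : Finset (Fin n → Bool)) : mq n n S ≤ 1 := by
  rw [mq_eq_card_subcubesIn, ← card_singleton (univ : Finset (Fin n → Bool))]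
  refine card_le_card fun C hC => ?_
  rw [mem_singleton, ← isSubcube_self_iff]
  exact (mem_subcubesIn.1 hC).1

lemma mq_self_eq_zero {S : Finset (Fin n → Bool)} (hS : S ≠ univ) : mq n n S = 0 := by
  rw [mq_eq_card_subcubesIn, card_eq_zero, eq_empty_iff_forall_notMem]
  intro C hC
  obtain ⟨hC, hCS⟩ := mem_subcubesIn.1 hC
  rw [isSubcube_self_iff.1 hC] at hCS
  exact hS (univ_subset_iff.1 hCS)

end Subcube

section Slice

variable {m : ℕ}

def cubeSlice (C : Finset (Fin (m + 1) → Bool)) (c : Bool) : Finset (Fin m → Bool) :=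
  univ.filter fun y => (Fin.cons c y : Fin (m + 1) → Bool) ∈ C

@[simp]
lemma mem_cubeSlice {C : Finset (Fin (m + 1) → Bool)} {c : Bool} {y : Fin m → Bool} :
    y ∈ cubeSlice C c ↔ (Fin.cons c y : Fin (m + 1) → Bool) ∈ C := by
  simp [cubeSlice]

lemma cubeSlice_mono {C D : Finset (Fin (m + 1) → Bool)} (h : C ⊆ D) (c : Bool) :
    cubeSlice C c ⊆ cubeSlice D c :=
  fun _ hy => mem_cubeSlice.2 (h (mem_cubeSlice.1 hy))

lemma mem_iff_tail_mem_cubeSlice {C : Finset (Fin (m + 1) → Bool)} {x : Fin (m + 1) → Bool} :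
    x ∈ C ↔ Fin.tail x ∈ cubeSlice C (x 0) := by
  rw [mem_cubeSlice, Fin.cons_self_tail]

lemma eq_of_cubeSlice_eq {C D : Finset (Fin (m + 1) → Bool)}
    (h : ∀ c, cubeSlice C c = cubeSlice D c) : C = D := by
  ext x
  rw [mem_iff_tail_mem_cubeSlice, mem_iff_tail_mem_cubeSlice (C := D), h]

lemma card_cubeSlice (S : Finset (Fin (m + 1) → Bool)) (c : Bool) :
    #(cubeSlice S c) = #(S.filter fun x => x 0 = c) := by
  refine card_nbij' (fun y => (Fin.cons c y : Fin (m + 1) → Bool)) Fin.tail (fun y hy => ?_)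
    (fun x hx => ?_) (fun y _ => Fin.tail_cons (α := fun _ => Bool) c y) (fun x hx => ?_)
  · simpa using hy
  · obtain ⟨hxS, rfl⟩ := mem_filter.1 hx
    exact mem_iff_tail_mem_cubeSlice.1 hxS
  · simp only [← (mem_filter.1 hx).2, Fin.cons_self_tail]

lemma card_cubeSlice_add_card_cubeSlice (S : Finset (Fin (m + 1) → Bool)) :
    #(cubeSlice S false) + #(cubeSlice S true) = #S := by
  rw [card_eq_sum_card_fiberwise (f := fun x : Fin (m + 1) → Bool => x 0) (t := univ)
    (fun _ _ => mem_univ _), Fintype.sum_bool, card_cubeSlice, card_cubeSlice, add_comm]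

def tailCoords (Q : Finset (Fin (m + 1))) : Finset (Fin m) :=
  univ.filter fun j => j.succ ∈ Q

lemma card_tailCoords (Q : Finset (Fin (m + 1))) :
    #(tailCoords Q) = #Q - if 0 ∈ Q then 1 else 0 := by
  have := Fin.card_filter_univ_succ' (· ∈ Q)
  simp only [filter_mem_eq_inter, univ_inter] at this
  rw [tailCoords, this]
  split_ifs <;> omega

lemma mem_cubeSlice_subcube {Q : Finset (Fin (m + 1))} {b : Fin (m + 1) → Bool} {c : Bool}
    {y : Fin m → Bool} :
    y ∈ cubeSlice (subcube Q b) c ↔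
      (0 ∈ Q → c = b 0) ∧ y ∈ subcube (tailCoords Q) (Fin.tail b) := by
  simp [Fin.forall_fin_succ, tailCoords, Fin.tail]

lemma cubeSlice_subcube_of_notMem {Q : Finset (Fin (m + 1))} (b : Fin (m + 1) → Bool) (c : Bool)
    (hQ : 0 ∉ Q) : cubeSlice (subcube Q b) c = subcube (tailCoords Q) (Fin.tail b) := by
  ext y; rw [mem_cubeSlice_subcube]; simp [hQ]

lemma cubeSlice_subcube_of_mem {Q : Finset (Fin (m + 1))} (b : Fin (m + 1) → Bool) (c : Bool)
    (hQ : 0 ∈ Q) :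
    cubeSlice (subcube Q b) c = if c = b 0 then subcube (tailCoords Q) (Fin.tail b) else ∅ := by
  ext y; rw [mem_cubeSlice_subcube]; split_ifs with hc <;> simp [hQ, hc]

lemma isSubcube_cubeSlices {q : ℕ} {C : Finset (Fin (m + 1) → Bool)}
    (hC : IsSubcube (m + 1) (q + 1) C) :
    (IsSubcube m (q + 1) (cubeSlice C false) ∧ cubeSlice C true = ∅) ∨
      (cubeSlice C false = ∅ ∧ IsSubcube m (q + 1) (cubeSlice C true)) ∨
      (IsSubcube m q (cubeSlice C false) ∧ cubeSlice C true = cubeSlice C false) := by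
  obtain ⟨Q, b, hQ, rfl⟩ := isSubcube_iff.1 hC
  have hcube (r : ℕ) (hr : #(tailCoords Q) = m - r) :
      IsSubcube m r (subcube (tailCoords Q) (Fin.tail b)) := ⟨_, _, hr, rfl⟩
  by_cases h0 : 0 ∈ Q
  · have hr : #(tailCoords Q) = m - (q + 1) := by rw [card_tailCoords, if_pos h0]; omega
    simp only [cubeSlice_subcube_of_mem b _ h0]
    cases b 0 <;> simp [hcube _ hr]
  · have hr : #(tailCoords Q) = m - q := by rw [card_tailCoords, if_neg h0]; omega
    simp only [cubeSlice_subcube_of_notMem b _ h0]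
    simp [hcube _ hr]

end Slice

lemma mq_succ_succ_le {m : ℕ} (q : ℕ) (S : Finset (Fin (m + 1) → Bool)) :
    mq (m + 1) (q + 1) S ≤ mq m (q + 1) (cubeSlice S false) + mq m (q + 1) (cubeSlice S true)
      + mq m q (cubeSlice S false ∩ cubeSlice S true) := by
  set A₀ := subcubesIn m (q + 1) (cubeSlice S false)
  set A₁ := subcubesIn m (q + 1) (cubeSlice S true)
  set A := subcubesIn m q (cubeSlice S false ∩ cubeSlice S true)
  have hmaps : ∀ C ∈ subcubesIn (m + 1) (q + 1) S, (cubeSlice C false, cubeSlice C true) ∈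
      A₀ ×ˢ {∅} ∪ ({∅} ×ˢ A₁ ∪ A.image fun D => (D, D)) := by
    intro C hC
    obtain ⟨hC, hCS⟩ := mem_subcubesIn.1 hC
    have h₀ := cubeSlice_mono hCS false
    have h₁ := cubeSlice_mono hCS true
    rcases isSubcube_cubeSlices hC with ⟨hD, he⟩ | ⟨he, hD⟩ | ⟨hD, he⟩
    · simp [A₀, hD, he, h₀]
    · simp [A₁, hD, he, h₁]
    · rw [he] at h₁
      simp [A, hD, he, subset_inter h₀ h₁]
  have hinj : Set.InjOn (fun C => (cubeSlice C false, cubeSlice C true))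
      (subcubesIn (m + 1) (q + 1) S : Set (Finset (Fin (m + 1) → Bool))) := fun C _ D _ h =>
    eq_of_cubeSlice_eq fun c => by cases c <;> simp_all
  calc mq (m + 1) (q + 1) S
      ≤ #(A₀ ×ˢ {∅} ∪ ({∅} ×ˢ A₁ ∪ A.image fun D => (D, D))) :=
        card_le_card_of_injOn _ hmaps hinj
    _ ≤ #(A₀ ×ˢ {∅}) + (#({∅} ×ˢ A₁) + #(A.image fun D => (D, D))) :=
        (card_union_le _ _).trans (Nat.add_le_add_left (card_union_le _ _) _)
    _ ≤ #A₀ + #A₁ + #A := by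
        simp only [card_product, card_singleton, mul_one, one_mul, ← add_assoc]
        exact Nat.add_le_add_left card_image_le _

section LowerSet

variable {n q : ℕ}

lemma self_mem_subcube (Q : Finset (Fin n)) (b : Fin n → Bool) : b ∈ subcube Q b := by
  simp

lemma update_mem_subcube_iff {Q : Finset (Fin n)} {b : Fin n → Bool} {i : Fin n} :
    Function.update b i (!b i) ∈ subcube Q b ↔ i ∉ Q := by
  simp only [mem_subcube]
  constructor
  · intro hb hi
    simpa using hb i hi
  · intro hi j hj
    rw [Function.update_of_ne (ne_of_mem_of_not_mem hj hi)]

lemma eq_of_subcube_eq {Q Q' : Finset (Fin n)} {b : Fin n → Bool}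
    (h : subcube Q b = subcube Q' b) : Q = Q' := by
  ext i
  rw [← not_iff_not, ← update_mem_subcube_iff, ← update_mem_subcube_iff, h]

lemma le_of_mem_subcube_compl {F : Finset (Fin n)} {x y : Fin n → Bool}
    (hF : ∀ i ∈ F, x i = true) (hy : y ∈ subcube Fᶜ x) : y ≤ x := by
  intro i
  by_cases hi : i ∈ F
  · simp [hF i hi]
  · exact (mem_subcube.1 hy i (mem_compl.2 hi)).le

lemma sum_choose_card_ones_le_mq {T : Finset (Fin n → Bool)}
    (hT : IsLowerSet (T : Set (Fin n → Bool))) :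
    ∑ x ∈ T, (#{i | x i = true}).choose q ≤ mq n q T := by
  calc ∑ x ∈ T, (#{i | x i = true}).choose q
      = #(T.sigma fun x => powersetCard q {i | x i = true}) := by
        simp [card_sigma, card_powersetCard]
    _ ≤ mq n q T := by
      refine card_le_card_of_injOn (fun p => subcube p.2ᶜ p.1) ?_ ?_
      · rintro ⟨x, F⟩ hp
        simp only [coe_sigma, Set.mem_sigma_iff, mem_coe, mem_powersetCard] at hp
        obtain ⟨hx, hFx, hF⟩ := hp
        refine mem_subcubesIn.2 ⟨⟨Fᶜ, x, by simp [card_compl, hF], rfl⟩, fun y hy => ?_⟩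
        exact hT (le_of_mem_subcube_compl (fun i hi => (mem_filter.1 (hFx hi)).2) hy) hx
      · rintro ⟨x, F⟩ hp ⟨x', F'⟩ hp' h
        simp only [coe_sigma, Set.mem_sigma_iff, mem_coe, mem_powersetCard] at hp hp' h
        have hones {x : Fin n → Bool} {F : Finset (Fin n)}
            (hF : F ⊆ ({i | x i = true} : Finset (Fin n))) : ∀ i ∈ F, x i = true :=
          fun i hi => (mem_filter.1 (hF hi)).2
        have hxx' : x = x' := le_antisymm
          (le_of_mem_subcube_compl (hones hp'.2.1) (h ▸ self_mem_subcube _ _))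
          (le_of_mem_subcube_compl (hones hp.2.1) (h ▸ self_mem_subcube _ _))
        subst hxx'
        rw [compl_inj_iff.1 (eq_of_subcube_eq h)]

end LowerSet

section Binary

variable {n : ℕ}

lemma bin_injOn : Set.InjOn (bin n) (range (2 ^ n) : Set ℕ) := by
  intro i hi j hj hij
  refine Nat.eq_of_testBit_eq fun r => ?_
  by_cases hr : r < n
  · exact congrFun hij ⟨r, hr⟩
  · have hle := Nat.pow_le_pow_right two_pos (not_lt.1 hr)
    rw [Nat.testBit_lt_two_pow ((mem_range.1 hi).trans_le hle),
      Nat.testBit_lt_two_pow ((mem_range.1 hj).trans_le hle)]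

lemma Sstar_two_pow : Sstar n (2 ^ n) = univ :=
  eq_univ_of_card _ <| by rw [Sstar, card_image_of_injOn bin_injOn, card_range]; simp

lemma card_ones_bin {j : ℕ} (hj : j < 2 ^ n) : #{i | bin n j i = true} = h j := by
  induction n generalizing j with
  | zero => simp [h, show j = 0 by simpa using hj]
  | succ n ih =>
    have hsucc (i : Fin n) : bin (n + 1) j i.succ = bin n (j / 2) i := by
      simp [bin, Nat.testBit_div_two]
    rw [Fin.card_filter_univ_succ', Finset.filter_congr (fun i _ => by rw [hsucc]),
      ih (by omega), h_eq_mod_add_h_div j]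
    simp only [bin, Fin.val_zero, Nat.testBit_zero, decide_eq_true_eq]
    split_ifs <;> omega

lemma isLowerSet_Sstar (k : ℕ) : IsLowerSet (Sstar n k : Set (Fin n → Bool)) := by
  intro x y hyx hx
  obtain ⟨j, hj, rfl⟩ := mem_image.1 (mem_coe.1 hx)
  obtain ⟨j', hj', rfl⟩ := mem_image.1 (Sstar_two_pow ▸ mem_univ y)
  refine mem_image_of_mem _ (mem_range.2 (lt_of_le_of_lt ?_ (mem_range.1 hj)))
  calc j' ≤ j % 2 ^ n := Nat.le_of_testBit fun r hr => ?_
    _ ≤ j := Nat.mod_le _ _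
  have hrn : r < n := by
    by_contra hrn
    rw [Nat.testBit_lt_two_pow ((mem_range.1 hj').trans_le
      (Nat.pow_le_pow_right two_pos (not_lt.1 hrn)))] at hr
    exact Bool.false_ne_true hr
  simpa [hrn] using top_le_iff.1 (hr.symm.le.trans (hyx ⟨r, hrn⟩) : true ≤ j.testBit r)

lemma sum_choose_card_ones_Sstar (q : ℕ) {k : ℕ} (hk : k ≤ 2 ^ n) :
    ∑ x ∈ Sstar n k, (#{i | x i = true}).choose q = weightSum (·.choose q) k := by
  rw [Sstar, sum_image fun i hi j hj => bin_injOn (range_subset_range.2 hk hi)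
    (range_subset_range.2 hk hj)]
  exact sum_congr rfl fun j hj => by rw [card_ones_bin ((mem_range.1 hj).trans_le hk)]

lemma h_two_pow_sub_one (n : ℕ) : h (2 ^ n - 1) = n := by
  rw [← card_ones_bin (n := n) (Nat.sub_lt (Nat.two_pow_pos n) one_pos)]
  simp [bin]

end Binary

lemma mq_self_le_weightSum {n : ℕ} (S : Finset (Fin n → Bool)) :
    mq n n S ≤ weightSum (·.choose n) #S := by
  by_cases hS : S = univ
  · have hlast : 2 ^ n - 1 ∈ range #S := by simp [hS]
    calc mq n n S ≤ (h (2 ^ n - 1)).choose n := by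
          rw [h_two_pow_sub_one, Nat.choose_self]; exact mq_self_le_one S
      _ ≤ weightSum (·.choose n) #S :=
          single_le_sum (f := fun j => (h j).choose n) (fun _ _ => Nat.zero_le _) hlast
  · simp [mq_self_eq_zero hS]

theorem mq_le_weightSum {n q : ℕ} (hq : q ≤ n) (S : Finset (Fin n → Bool)) :
    mq n q S ≤ weightSum (·.choose q) #S := by
  induction n generalizing q with
  | zero =>
    obtain rfl := Nat.le_zero.1 hq
    simp [mq_zero, weightSum]
  | succ m ih =>
    obtain _ | q := q
    · simp [mq_zero, weightSum]
    obtain hqm | rfl := Nat.lt_succ_iff_lt_or_eq.1 hq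
    · calc _ ≤ _ := mq_succ_succ_le q S
        _ ≤ _ := add_le_add_three (ih (by omega) _) (ih (by omega) _) (ih (by omega) _)
        _ ≤ _ := weightSum.choose_succ_add_choose_le q (card_le_card inter_subset_left)
          (card_le_card inter_subset_right)
        _ = _ := by rw [card_cubeSlice_add_card_cubeSlice]
    · exact mq_self_le_weightSum S

theorem mq_le_sum_hq_general (n k q : ℕ) (hq' : q ≤ n) :
    (∀ S : Finset (Fin n → Bool), S.card = k → mq n q S ≤ ∑ j ∈ Finset.range k, hq q j) ∧
    (∀ S : Finset (Fin n → Bool), S.card = k → mq n q S ≤ mq n q (Sstar n k)) := by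
  have hbound (S : Finset (Fin n → Bool)) (hS : S.card = k) :
      mq n q S ≤ ∑ j ∈ Finset.range k, hq q j :=
    hS ▸ mq_le_weightSum hq' S
  refine ⟨hbound, fun S hS => (hbound S hS).trans ?_⟩
  have hk : k ≤ 2 ^ n := by simpa [hS] using card_le_univ S
  calc ∑ j ∈ range k, hq q j = ∑ x ∈ Sstar n k, (#{i | x i = true}).choose q :=
        (sum_choose_card_ones_Sstar q hk).symm
    _ ≤ mq n q (Sstar n k) := sum_choose_card_ones_le_mq (isLowerSet_Sstar k)

/-- For `n ≥ 1`, `1 ≤ k ≤ 2^n` and `q ≤ n`, every `k`-element set `S ⊆ B_n` contains at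
most `∑_{j=0}^{k-1} h_q j` many `q`-dimensional subcubes; in particular `S*_{k,n}` is an
optimal solution of the problem of finding a `k`-element subset of `B_n` containing a
maximal number of `q`-dimensional subcubes. -/
theorem mq_le_sum_hq (n k q : ℕ) (hn : 1 ≤ n) (hk1 : 1 ≤ k) (hk2 : k ≤ 2 ^ n) (hq' : q ≤ n) :
    (∀ S : Finset (Fin n → Bool), S.card = k → mq n q S ≤ ∑ j ∈ Finset.range k, hq q j) ∧
    (∀ S : Finset (Fin n → Bool), S.card = k → mq n q S ≤ mq n q (Sstar n k)) :=
  mq_le_sum_hq_general n k q hq'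
end
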